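/- Let π be the uniform probability measure on the hypercube {−1,1}^d ⊂ ℝ^d, and let Q be a symmetric positive definite d×d matrix with eigenvalues 0 < m := λ_min(Q) < M := λ_max(Q) satisfying M − m < 1. Set T := (1/2) log(1 + M⁻¹) and p_T(x) := ∫ exp(−‖x − e^{−T} y‖² / (2(1 − e^{−2T}))) dπ(y). Then there exists c > 0 such that for all x ∈ ℝ^d: ∇² log p_T(x) ≼ (λ* − c)·I, where λ* := (1 + M⁻¹)/(m⁻¹ − M⁻¹); hence the boosted posterior ν_T of the Ising model ν = T_Q π, whose log-density differs from log p_T by a quadratic with Hessian ≼ −λ* I, is strongly log-concave. -/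

import Mathlib

open MeasureTheory Set Matrix

noncomputable section

/-- The OU-evolved (unnormalized) density of `π` at time `T = ½ log(1 + M⁻¹)`:
`p_T(x) = ∫ exp(-‖x - e^{-T} y‖²/(2(1-e^{-2T}))) dπ(y)`. -/
def pT {d : ℕ} (π : Measure (Fin d → ℝ)) (M : ℝ) (x : Fin d → ℝ) : ℝ :=
  ∫ y, Real.exp (-((x - Real.exp (-((1/2) * Real.log (1 + M⁻¹))) • y) ⬝ᵥ
      (x - Real.exp (-((1/2) * Real.log (1 + M⁻¹))) • y)) /
      (2 * (1 - Real.exp (-2 * ((1/2) * Real.log (1 + M⁻¹)))))) ∂π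

/-- The uniform measure on `{-1, 1} ⊂ ℝ`. -/
def twoPoint : Measure ℝ :=
  (2 : ENNReal)⁻¹ • (Measure.dirac (1:ℝ) + Measure.dirac (-1:ℝ))

/-- The uniform measure on the hypercube `{-1,1}^d ⊂ ℝ^d`. -/
def hypercube (d : ℕ) : Measure (Fin d → ℝ) := Measure.pi fun _ : Fin d => twoPoint

/-!
On the hypercube the Gaussian convolution `p_T` factorizes over coordinates: with `a = e^{-T}` and
`s = 1 - e^{-2T}`, each factor is `e^{-(t² + a²)/2s} cosh (a t / s)`. So `log p_T` is a sum of
one-variable functions with second derivative `(a/s)² / cosh² (a t / s) - 1/s ≤ (a/s)² - 1/s`,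
and at the blowup time this is `(M + 1)(M - 1)`, the bound `(1 + M)(M χ_M(π) - 1)` with
`χ_M(π) = 1`. It lies below `λ* = (1 + M⁻¹)/(m⁻¹ - M⁻¹)` exactly when `M - m < 1`.
-/

open Real

instance : IsProbabilityMeasure twoPoint := by
  constructor
  simp [twoPoint]
  rw [ENNReal.inv_two_add_inv_two]

lemma integral_twoPoint {f : ℝ → ℝ} (hf : Measurable f) :
    ∫ t, f t ∂twoPoint = 2⁻¹ * (f 1 + f (-1)) := by
  have hi : ∀ c : ℝ, Integrable f (Measure.dirac c) := fun c =>
    ⟨hf.aestronglyMeasurable, by simp [HasFiniteIntegral, lintegral_dirac]⟩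
  rw [twoPoint, integral_smul_measure, integral_add_measure (hi 1) (hi (-1)),
    integral_dirac, integral_dirac]
  simp

lemma integral_hypercube_prod {d : ℕ} (f : Fin d → ℝ → ℝ) :
    ∫ x, ∏ i, f i (x i) ∂hypercube d = ∏ i, ∫ t, f i t ∂twoPoint := by
  let _ : MeasureSpace ℝ := ⟨twoPoint⟩
  exact integral_fintype_prod_eq_prod f

section SeparableHessian

variable {ι : Type*} [Fintype ι]

theorem fderiv_sum_comp_apply {φ φ' : ι → ℝ → ℝ} (hφ : ∀ i t, HasDerivAt (φ i) (φ' i t) t)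
    (y v : ι → ℝ) :
    fderiv ℝ (fun u : ι → ℝ => ∑ i, φ i (u i)) y v = ∑ i, φ' i (y i) * v i := by
  have H : HasFDerivAt (fun u : ι → ℝ => ∑ i, φ i (u i))
      (∑ i, φ' i (y i) • ContinuousLinearMap.proj i) y :=
    HasFDerivAt.fun_sum fun i _ => (hφ i (y i)).comp_hasFDerivAt y
      (ContinuousLinearMap.proj (R := ℝ) (φ := fun _ : ι => ℝ) i).hasFDerivAt
  simp [H.fderiv]

theorem fderiv_fderiv_sum_comp_le {φ φ' φ'' : ℝ → ℝ} {K : ℝ}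
    (hφ : ∀ t, HasDerivAt φ (φ' t) t) (hφ' : ∀ t, HasDerivAt φ' (φ'' t) t)
    (hK : ∀ t, φ'' t ≤ K) (x v : ι → ℝ) :
    fderiv ℝ (fun y => fderiv ℝ (fun u : ι → ℝ => ∑ i, φ (u i)) y v) x v ≤ K * (v ⬝ᵥ v) := by
  have hgrad : (fun y => fderiv ℝ (fun u : ι → ℝ => ∑ i, φ (u i)) y v)
      = fun y => ∑ i, φ' (y i) * v i :=
    funext fun y => fderiv_sum_comp_apply (fun _ => hφ) y v
  rw [hgrad, fderiv_sum_comp_apply (fun i t => (hφ' t).mul_const (v i)) x v, dotProduct,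
    Finset.mul_sum]
  refine Finset.sum_le_sum fun i _ => ?_
  calc φ'' (x i) * v i * v i = φ'' (x i) * (v i * v i) := by ring
    _ ≤ K * (v i * v i) := mul_le_mul_of_nonneg_right (hK _) (mul_self_nonneg _)

end SeparableHessian

lemma hasDerivAt_tanh (t : ℝ) : HasDerivAt tanh (1 / cosh t ^ 2) t := by
  have h := (hasDerivAt_sinh t).div (hasDerivAt_cosh t) (cosh_pos t).ne'
  rw [show tanh = sinh / cosh from funext tanh_eq_sinh_div_cosh]
  exact h.congr_deriv (by rw [← cosh_sq_sub_sinh_sq t]; ring)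

/-- The log-density, up to an additive constant, of the Gaussian mixture
`½ (𝒩(a, s) + 𝒩(-a, s))` on `ℝ`. -/
def logMixture (a s t : ℝ) : ℝ := log (cosh (a / s * t)) - (t ^ 2 + a ^ 2) / (2 * s)

lemma hasDerivAt_logMixture (a s t : ℝ) :
    HasDerivAt (logMixture a s) (a / s * tanh (a / s * t) - t / s) t := by
  have hb : HasDerivAt (fun t => a / s * t) (a / s) t := by
    simpa using (hasDerivAt_id t).const_mul (a / s)
  have h := (hb.cosh.log (cosh_pos _).ne').sub
    (((hasDerivAt_pow 2 t).add_const (a ^ 2)).div_const (2 * s))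
  refine h.congr_deriv ?_
  rw [tanh_eq_sinh_div_cosh]
  push_cast
  ring

lemma hasDerivAt_deriv_logMixture (a s t : ℝ) :
    HasDerivAt (fun t => a / s * tanh (a / s * t) - t / s)
      ((a / s) ^ 2 / cosh (a / s * t) ^ 2 - 1 / s) t := by
  have hb : HasDerivAt (fun t => a / s * t) (a / s) t := by
    simpa using (hasDerivAt_id t).const_mul (a / s)
  have h := (((hasDerivAt_tanh _).comp t hb).const_mul (a / s)).sub ((hasDerivAt_id t).div_const s)
  exact h.congr_deriv (by ring)

lemma sq_div_cosh_sq_le (b t : ℝ) : b ^ 2 / cosh t ^ 2 ≤ b ^ 2 :=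
  div_le_self (sq_nonneg b) (one_le_pow₀ (one_le_cosh t))

lemma integral_twoPoint_gaussian (a s t : ℝ) :
    ∫ y, exp (-(t - a * y) ^ 2 / (2 * s)) ∂twoPoint
      = exp (-(t ^ 2 + a ^ 2) / (2 * s)) * cosh (a / s * t) := by
  have hσ : ∀ σ : ℝ, σ ^ 2 = 1 → exp (-(t - a * σ) ^ 2 / (2 * s))
      = exp (-(t ^ 2 + a ^ 2) / (2 * s)) * exp (σ * (a / s * t)) := by
    intro σ hσ
    rw [← exp_add]
    congr 1
    linear_combination (-a ^ 2 / (2 * s)) * hσ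
  rw [integral_twoPoint (by fun_prop), hσ 1 (by norm_num), hσ (-1) (by norm_num), cosh_eq,
    one_mul, neg_one_mul]
  ring

lemma integral_hypercube_gaussian {d : ℕ} (a s : ℝ) (x : Fin d → ℝ) :
    ∫ y, exp (-((x - a • y) ⬝ᵥ (x - a • y)) / (2 * s)) ∂hypercube d
      = ∏ i, exp (-(x i ^ 2 + a ^ 2) / (2 * s)) * cosh (a / s * x i) := by
  have hfactor : ∀ y : Fin d → ℝ, exp (-((x - a • y) ⬝ᵥ (x - a • y)) / (2 * s))
      = ∏ i, exp (-(x i - a * y i) ^ 2 / (2 * s)) := by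
    intro y
    rw [← exp_sum, ← Finset.sum_div, Finset.sum_neg_distrib]
    simp only [dotProduct, Pi.sub_apply, Pi.smul_apply, smul_eq_mul, sq]
  simp_rw [hfactor]
  rw [integral_hypercube_prod fun i t => exp (-(x i - a * t) ^ 2 / (2 * s))]
  simp_rw [integral_twoPoint_gaussian]

lemma log_integral_hypercube_gaussian {d : ℕ} (a s : ℝ) (x : Fin d → ℝ) :
    log (∫ y, exp (-((x - a • y) ⬝ᵥ (x - a • y)) / (2 * s)) ∂hypercube d)
      = ∑ i, logMixture a s (x i) := by
  rw [integral_hypercube_gaussian, log_prod fun i _ => (mul_pos (exp_pos _) (cosh_pos _)).ne']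
  refine Finset.sum_congr rfl fun i _ => ?_
  rw [log_mul (exp_pos _).ne' (cosh_pos _).ne', log_exp, logMixture, neg_div]
  ring

lemma exp_neg_two_mul_half_log_one_add_inv {M : ℝ} (hM : 0 < M) :
    exp (-2 * ((1/2) * log (1 + M⁻¹))) = M / (M + 1) := by
  rw [show -2 * ((1/2) * log (1 + M⁻¹)) = -log (1 + M⁻¹) by ring, exp_neg,
    exp_log (by positivity)]
  field_simp

lemma add_one_mul_sub_one_lt {M m : ℝ} (hm : 0 < m) (hmM : m < M) (hgap : M - m < 1) :
    (M + 1) * (M - 1) < (1 + M⁻¹) / (m⁻¹ - M⁻¹) := by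
  have hM : 0 < M := hm.trans hmM
  have hlam : (1 + M⁻¹) / (m⁻¹ - M⁻¹) = (M + 1) * (m / (M - m)) := by
    field_simp
  rw [hlam]
  gcongr
  rw [lt_div_iff₀ (sub_pos.2 hmM)]
  -- `(M - 1)(M - m) - m = M (M - m - 1)`
  nlinarith

theorem ising_boosted_logconcave_general
    (d : ℕ)
    (M m : ℝ) (hm : 0 < m) (hmM : m < M)
    (hgap : M - m < 1) :
    ∃ c > 0, ∀ x v : Fin d → ℝ,
      fderiv ℝ (fun y => fderiv ℝ
          (fun u => Real.log (pT (hypercube d) M u)) y v) x v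
        ≤ ((1 + M⁻¹)/(m⁻¹ - M⁻¹) - c) * (v ⬝ᵥ v) := by
  have hM : 0 < M := hm.trans hmM
  have hexp := exp_neg_two_mul_half_log_one_add_inv hM
  set a := exp (-((1/2) * log (1 + M⁻¹)))
  set s := 1 - exp (-2 * ((1/2) * log (1 + M⁻¹))) with hs
  have ha : a ^ 2 = M / (M + 1) := by
    rw [← exp_nat_mul, ← hexp]
    ring_nf
  have hK : (a / s) ^ 2 - 1 / s = (M + 1) * (M - 1) := by
    have hM1 : M + 1 ≠ 0 := by positivity
    rw [div_pow, ha, hs, hexp]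
    field_simp
    ring
  have hlog : (fun u => log (pT (hypercube d) M u)) = fun u => ∑ i, logMixture a s (u i) :=
    funext (log_integral_hypercube_gaussian a s)
  refine ⟨_, sub_pos.2 (add_one_mul_sub_one_lt hm hmM hgap), fun x v => ?_⟩
  rw [sub_sub_cancel, hlog, ← hK]
  exact fderiv_fderiv_sum_comp_le (hasDerivAt_logMixture a s) (hasDerivAt_deriv_logMixture a s)
    (fun t => sub_le_sub_right (sq_div_cosh_sq_le _ _) _) x v

/-- **Tilted transport for Ising models.**  Let `π` be the uniform measure on the hypercube
`{-1,1}^d` and `Q` symmetric positive definite with extreme eigenvalues `0 < m < M`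
satisfying `M - m < 1`.  Then `∇² log p_T ≼ (λ* - c)·I` for some `c > 0`, where
`λ* = (1+M⁻¹)/(m⁻¹-M⁻¹)`; hence the boosted posterior `ν_T` of the Ising model `T_Q π`,
whose log-density differs from `log p_T` by a quadratic with Hessian `≼ -λ*·I`, is strongly
log-concave. -/
theorem ising_boosted_logconcave
    (d : ℕ) (Q : Matrix (Fin d) (Fin d) ℝ) (hQ : Q.PosDef)
    (M m : ℝ) (hm : 0 < m) (hmM : m < M)
    (hMub : (M • (1 : Matrix (Fin d) (Fin d) ℝ) - Q).PosSemidef)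
    (hMmem : M ∈ spectrum ℝ Q)
    (hmlb : (Q - m • (1 : Matrix (Fin d) (Fin d) ℝ)).PosSemidef)
    (hmmem : m ∈ spectrum ℝ Q)
    (hgap : M - m < 1) :
    ∃ c > 0, ∀ x v : Fin d → ℝ,
      fderiv ℝ (fun y => fderiv ℝ
          (fun u => Real.log (pT (hypercube d) M u)) y v) x v
        ≤ ((1 + M⁻¹)/(m⁻¹ - M⁻¹) - c) * (v ⬝ᵥ v) :=
  ising_boosted_logconcave_general d M m hm hmM hgap
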